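/- In the ring R = ℚ[c₁,c₂,d₂]/I (with I generated by c₁⁴ + 3c₂² − 9c₂d₂ − 3d₂², c₁²c₂ − c₂d₂ − 3d₂², c₁²d₂ − 3d₂², 9c₁c₂² − 14c₁c₂d₂, 3c₁d₂² − 2c₁c₂d₂), the identity 2·c₁⁶ = 57·d₂³ holds. (Since d₂³ equals twice the point class, this recovers that the degree of Y is 57.) -/

import Mathlib

/-!
Modulo the first three relations, `c₁⁶ = c₁² · c₁⁴` reduces to `-3c₂²d₂ + 18c₂d₂² + 9d₂³`,
while multiplying those relations by `c₂` and `d₂` gives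
`c₂d₂² = 3/2 · d₂³` and `c₂²d₂ = 5/2 · d₂³`; hence `c₁⁶ = 57/2 · d₂³`.
-/

open MvPolynomial

noncomputable section

abbrev c1 : MvPolynomial (Fin 3) ℚ := X 0
abbrev c2 : MvPolynomial (Fin 3) ℚ := X 1
abbrev d2 : MvPolynomial (Fin 3) ℚ := X 2

def chowIdeal : Ideal (MvPolynomial (Fin 3) ℚ) :=
  Ideal.span {c1 ^ 4 + 3 * c2 ^ 2 - 9 * c2 * d2 - 3 * d2 ^ 2,
    c1 ^ 2 * c2 - c2 * d2 - 3 * d2 ^ 2,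
    c1 ^ 2 * d2 - 3 * d2 ^ 2,
    9 * c1 * c2 ^ 2 - 14 * c1 * c2 * d2,
    3 * c1 * d2 ^ 2 - 2 * c1 * c2 * d2}

theorem two_mul_pow_six_eq_of_relations {R : Type*} [CommRing R] {c₁ c₂ d₂ : R}
    (h₁ : c₁ ^ 4 + 3 * c₂ ^ 2 - 9 * c₂ * d₂ - 3 * d₂ ^ 2 = 0)
    (h₂ : c₁ ^ 2 * c₂ - c₂ * d₂ - 3 * d₂ ^ 2 = 0)
    (h₃ : c₁ ^ 2 * d₂ - 3 * d₂ ^ 2 = 0) :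
    2 * c₁ ^ 6 = 57 * d₂ ^ 3 := by
  linear_combination (2 * c₁ ^ 2 - 2 * d₂) * h₁ + (-6 * c₂ + 9 * d₂) * h₂
    + (2 * c₁ ^ 2 + 9 * c₂ + 12 * d₂) * h₃

theorem degree_of_Y :
    Ideal.Quotient.mk chowIdeal (2 * c1 ^ 6) =
      Ideal.Quotient.mk chowIdeal (57 * d2 ^ 3) := by
  have vanish {p} (hp : p ∈ chowIdeal) : Ideal.Quotient.mk chowIdeal p = 0 :=
    Ideal.Quotient.eq_zero_iff_mem.2 hp
  have h₁ := vanish (Ideal.subset_span (by simp) :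
    c1 ^ 4 + 3 * c2 ^ 2 - 9 * c2 * d2 - 3 * d2 ^ 2 ∈ chowIdeal)
  have h₂ := vanish (Ideal.subset_span (by simp) : c1 ^ 2 * c2 - c2 * d2 - 3 * d2 ^ 2 ∈ chowIdeal)
  have h₃ := vanish (Ideal.subset_span (by simp) : c1 ^ 2 * d2 - 3 * d2 ^ 2 ∈ chowIdeal)
  simp only [map_sub, map_add, map_mul, map_pow, map_ofNat] at h₁ h₂ h₃ ⊢
  exact two_mul_pow_six_eq_of_relations h₁ h₂ h₃

end
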